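/- Noise attenuation for low-pass stem kernels: if the DFT of the kernel K_k satisfies |K̂_k(ω)| ≤ (1+βk‖ω‖)^{−1−δ} for all frequencies ω on the grid, and the lattice sum obeys the radial comparison (1/(HW))∑_ω g(‖ω‖) ≤ A₂∫_ε^π r g(r) dr for radially nonincreasing g, then the per-pixel noise gain γ(k) = (1/(HW))∑_ω |K̂_k(ω)|² is bounded by C/k² for a constant C independent of k. -/

import Mathlib

/-!
Squaring the envelope bounds each summand of `γ(k)` by the radial profile
`g(r) = (1 + βk r)^{-(2+2δ)}`, which is nonnegative and nonincreasing, so the sum-to-integral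
comparison applies to it. On `r > 0` one has `r g(r) ≤ (βk)⁻¹ (1 + βk r)^{-(1+2δ)}`, whose
integral over `(0, ∞)` is `1 / (2δ (βk)²)`; hence `γ(k) ≤ A₂ / (2δβ² k²)`.
-/

open MeasureTheory
open scoped Real BigOperators

section RadialProfile

variable {b p : ℝ}

/-- `(1 + b r)^{-(2+p)}`, clamped at `r = 0` because `rpow` of a negative base is junk. -/
noncomputable def radialProfile (b p r : ℝ) : ℝ :=
  (1 + b * max r 0) ^ (-(2 + p))

lemma one_add_mul_pos (hb : 0 ≤ b) {r : ℝ} (hr : 0 ≤ r) : 0 < 1 + b * r := by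
  have := mul_nonneg hb hr
  linarith

lemma radialProfile_nonneg (hb : 0 ≤ b) (r : ℝ) : 0 ≤ radialProfile b p r :=
  Real.rpow_nonneg (one_add_mul_pos hb (le_max_right r 0)).le _

lemma radialProfile_of_nonneg {r : ℝ} (hr : 0 ≤ r) :
    radialProfile b p r = (1 + b * r) ^ (-(2 + p)) := by
  rw [radialProfile, max_eq_left hr]

lemma antitoneOn_radialProfile (hb : 0 ≤ b) (hp : 0 ≤ p) :
    AntitoneOn (radialProfile b p) (Set.Ici 0) := by
  intro x hx y hy hxy
  rw [radialProfile_of_nonneg hx, radialProfile_of_nonneg hy]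
  exact Real.rpow_le_rpow_of_nonpos (one_add_mul_pos hb hx)
    (by nlinarith) (by linarith)

lemma sq_le_radialProfile (hb : 0 ≤ b) {r x : ℝ} (hr : 0 ≤ r) (hx : 0 ≤ x)
    (hxr : x ≤ (1 + b * r) ^ (-(1 + p / 2))) : x ^ 2 ≤ radialProfile b p r := by
  have hpos := one_add_mul_pos hb hr
  calc x ^ 2 ≤ ((1 + b * r) ^ (-(1 + p / 2))) ^ 2 := pow_le_pow_left₀ hx hxr 2
    _ = radialProfile b p r := by
      rw [radialProfile_of_nonneg hr, ← Real.rpow_natCast, ← Real.rpow_mul hpos.le]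
      ring_nf

lemma mul_radialProfile_le (hb : 0 < b) {r : ℝ} (hr : 0 ≤ r) :
    r * radialProfile b p r ≤ b⁻¹ * (1 + b * r) ^ (-(1 + p)) := by
  have hpos := one_add_mul_pos hb.le hr
  have hsplit : (1 + b * r) ^ (-(2 + p)) = (1 + b * r)⁻¹ * (1 + b * r) ^ (-(1 + p)) := by
    rw [← Real.rpow_neg_one, ← Real.rpow_add hpos]
    ring_nf
  rw [radialProfile_of_nonneg hr, hsplit, ← mul_assoc]
  refine mul_le_mul_of_nonneg_right ?_ (Real.rpow_nonneg hpos.le _)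
  rw [← div_eq_mul_inv, div_le_iff₀ hpos, inv_mul_eq_div, le_div_iff₀ hb]
  nlinarith

lemma integral_one_add_mul_rpow_le (hb : 0 < b) (hp : 0 < p) {a c : ℝ} (ha : 0 ≤ a)
    (hac : a ≤ c) : ∫ r in a..c, (1 + b * r) ^ (-(1 + p)) ≤ 1 / (p * b) := by
  have hzero : (0 : ℝ) ∉ Set.uIcc (b * a + 1) (b * c + 1) := by
    rw [Set.uIcc_of_le (by nlinarith)]
    exact fun h => by nlinarith [h.1]
  have hval : ∫ r in a..c, (1 + b * r) ^ (-(1 + p)) =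
      ((1 + b * a) ^ (-p) - (1 + b * c) ^ (-p)) / (p * b) := by
    have hshift : (fun r => (1 + b * r) ^ (-(1 + p))) = fun r => (b * r + 1) ^ (-(1 + p)) := by
      funext r
      rw [add_comm 1 (b * r)]
    rw [hshift, intervalIntegral.integral_comp_mul_add (fun x => x ^ (-(1 + p))) hb.ne',
      integral_rpow (Or.inr ⟨by linarith, hzero⟩), smul_eq_mul,
      show -(1 + p) + 1 = -p by ring, add_comm (b * a), add_comm (b * c)]
    field_simp
    ring
  have hc : 0 ≤ (1 + b * c) ^ (-p) := Real.rpow_nonneg (one_add_mul_pos hb.le (ha.trans hac)).le _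
  have ha' : (1 + b * a) ^ (-p) ≤ 1 :=
    Real.rpow_le_one_of_one_le_of_nonpos (by nlinarith) (by linarith)
  rw [hval]
  gcongr
  linarith

lemma setIntegral_mul_radialProfile_le (hb : 0 < b) (hp : 0 < p) {a c : ℝ} (ha : 0 ≤ a)
    (hac : a ≤ c) : ∫ r in Set.Ioc a c, r * radialProfile b p r ≤ 1 / (p * b ^ 2) := by
  have hcont : ContinuousOn (fun r => b⁻¹ * (1 + b * r) ^ (-(1 + p))) (Set.Icc a c) :=
    continuousOn_const.mul <|
      (continuous_const.add (continuous_const.mul continuous_id)).continuousOn.rpow_const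
        fun r hr => Or.inl (one_add_mul_pos hb.le (ha.trans hr.1)).ne'
  have hmem : ∀ r ∈ Set.Ioc a c, 0 ≤ r := fun r hr => ha.trans hr.1.le
  calc ∫ r in Set.Ioc a c, r * radialProfile b p r
      ≤ ∫ r in Set.Ioc a c, b⁻¹ * (1 + b * r) ^ (-(1 + p)) := by
        refine integral_mono_of_nonneg ?_
          (hcont.integrableOn_Icc.mono_set Set.Ioc_subset_Icc_self) ?_
        · exact ae_restrict_of_forall_mem measurableSet_Ioc fun r hr =>
            mul_nonneg (hmem r hr) (radialProfile_nonneg hb.le r)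
        · exact ae_restrict_of_forall_mem measurableSet_Ioc fun r hr =>
            mul_radialProfile_le hb (hmem r hr)
    _ = b⁻¹ * ∫ r in a..c, (1 + b * r) ^ (-(1 + p)) := by
        rw [integral_const_mul, intervalIntegral.integral_of_le hac]
    _ ≤ b⁻¹ * (1 / (p * b)) := by
        gcongr
        exact integral_one_add_mul_rpow_le hb hp ha hac
    _ = 1 / (p * b ^ 2) := by field_simp

end RadialProfile

/-- Noise attenuation for low-pass stem kernels: under the radial low-pass envelope
`|K̂_k(ω)| ≤ (1+βk‖ω‖)^{−1−δ}` and the radial sum-to-integral comparison with constant `A₂`,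
the per-pixel noise gain `γ(k) = (1/(HW))∑_ω |K̂_k(ω)|²` satisfies `γ(k) ≤ C/k²` for a
constant `C = C(β,δ,A₂)` independent of `k` and of the grid. -/
theorem stmt_12 (β δ A₂ : ℝ) (hβ : 0 < β) (hδ : 0 < δ) (hA₂ : 0 < A₂) :
    ∃ C : ℝ, 0 < C ∧
      ∀ (k : ℝ), 1 ≤ k →
      ∀ (ι : Type) (_ : Fintype ι) (normω : ι → ℝ) (HW ε : ℝ) (Khat : ι → ℂ),
        0 < HW → 0 < ε → ε < π →
        (∀ i, 0 ≤ normω i) →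
        (∀ i, ‖Khat i‖ ≤ (1 + β * k * normω i) ^ (-(1 + δ))) →
        (∀ g : ℝ → ℝ, (∀ r, 0 ≤ g r) → AntitoneOn g (Set.Ici 0) →
          (1 / HW) * ∑ i, g (normω i) ≤ A₂ * ∫ r in Set.Ioc ε π, r * g r) →
        (1 / HW) * ∑ i, ‖Khat i‖ ^ 2 ≤ C / k ^ 2 := by
  refine ⟨A₂ / (2 * δ * β ^ 2), by positivity, ?_⟩
  intro k hk ι _ normω HW ε Khat hHW hε hεπ hnorm hK hcomp
  have hb : 0 < β * k := mul_pos hβ (by linarith)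
  have hsummand : ∀ i, ‖Khat i‖ ^ 2 ≤ radialProfile (β * k) (2 * δ) (normω i) := fun i =>
    sq_le_radialProfile hb.le (hnorm i) (norm_nonneg _) (by simpa using hK i)
  calc (1 / HW) * ∑ i, ‖Khat i‖ ^ 2
      ≤ (1 / HW) * ∑ i, radialProfile (β * k) (2 * δ) (normω i) := by
        gcongr with i
        exact hsummand i
    _ ≤ A₂ * ∫ r in Set.Ioc ε π, r * radialProfile (β * k) (2 * δ) r :=
        hcomp _ (radialProfile_nonneg hb.le) (antitoneOn_radialProfile hb.le (by positivity))
    _ ≤ A₂ * (1 / (2 * δ * (β * k) ^ 2)) := by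
        gcongr
        exact setIntegral_mul_radialProfile_le hb (by positivity) hε.le hεπ.le
    _ = A₂ / (2 * δ * β ^ 2) / k ^ 2 := by
        field_simp
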